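/- arXiv:2505.05873 — 2 statements merged into one kernel-verified Lean document; each statement's English description precedes it below -/
import Mathlib

section
/- For every positive integer n and integer k with 1 ≤ k ≤ n-1, the sequence D_{n,k} satisfies the log-concavity inequality D_{n,k}^2 ≥ D_{n,k-1} * D_{n,k+1} (with D_{n,0} = D_{n,n+1} = 0). -/
open Finset

/-- The summands of the Baxter numbers, extended by zero outside 1 ≤ k ≤ n. -/
def baxterD (n k : ℕ) : ℚ :=
  if 1 ≤ k ∧ k ≤ n then
    2 / ((n : ℚ) * ((n : ℚ) + 1) ^ 2) * ((n + 1).choose (k - 1) : ℚ) *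
      ((n + 1).choose k : ℚ) * ((n + 1).choose (k + 1) : ℚ)
  else 0

lemma choose_log_concave (m j : ℕ) (hj : 1 ≤ j) :
    m.choose (j - 1) * m.choose (j + 1) ≤ (m.choose j) ^ 2 := by
  rcases le_or_gt j m with h | h
  · have h1 := Nat.choose_succ_right_eq m j
    have h2 := Nat.choose_succ_right_eq m (j - 1)
    rw [Nat.sub_add_cancel hj] at h2
    set A := m.choose (j - 1)
    set B := m.choose j
    set C := m.choose (j + 1)
    have e : m - (j - 1) = (m - j) + 1 := by omega
    rw [e] at h2
    have key : A * C * ((j + 1) * ((m - j) + 1)) ≤ B ^ 2 * ((j + 1) * ((m - j) + 1)) := by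
      calc A * C * ((j + 1) * ((m - j) + 1)) = (C * (j + 1)) * (A * ((m - j) + 1)) := by ring
        _ = (B * (m - j)) * (B * j) := by rw [h1, h2]
        _ = B ^ 2 * (j * (m - j)) := by ring
        _ ≤ B ^ 2 * ((j + 1) * ((m - j) + 1)) :=
            Nat.mul_le_mul_left _ (Nat.mul_le_mul (by omega) (by omega))
    exact Nat.le_of_mul_le_mul_right key (by positivity)
  · have hc : m.choose (j + 1) = 0 := Nat.choose_eq_zero_of_lt (by omega)
    simp [hc]

theorem baxterD_log_concave (n k : ℕ) (hn : 1 ≤ n) (hk1 : 1 ≤ k) (hkn : k ≤ n - 1) :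
    baxterD n (k - 1) * baxterD n (k + 1) ≤ (baxterD n k) ^ 2 := by
  rcases eq_or_lt_of_le hk1 with h1 | h2
  · -- k = 1
    have : baxterD n (k - 1) = 0 := by
      simp [baxterD, ← h1]
    rw [this, zero_mul]
    positivity
  · -- k ≥ 2
    have hk2 : 2 ≤ k := h2
    have hkn' : k + 1 ≤ n := by omega
    have i1 := choose_log_concave (n + 1) (k - 1) (by omega)
    have i2 := choose_log_concave (n + 1) k (by omega)
    have i3 := choose_log_concave (n + 1) (k + 1) (by omega)
    have e1 : k - 1 - 1 = k - 2 := by omega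
    have e2 : k - 1 + 1 = k := by omega
    have e3 : k + 1 - 1 = k := by omega
    have e4 : k + 1 + 1 = k + 2 := by omega
    rw [e1, e2] at i1
    rw [e3, e4] at i3
    have hY : (n+1).choose (k-2) * (n+1).choose k * ((n+1).choose k * (n+1).choose (k+2))
        * ((n+1).choose (k-1) * (n+1).choose (k+1))
        ≤ ((n+1).choose (k-1)) ^ 2 * (((n+1).choose (k+1)) ^ 2) * (((n+1).choose k) ^ 2) :=
      Nat.mul_le_mul (Nat.mul_le_mul i1 i3) i2
    have hYQ : ((n+1).choose (k-2) : ℚ) * ((n+1).choose k : ℚ) * (((n+1).choose k : ℚ) * ((n+1).choose (k+2) : ℚ))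
        * (((n+1).choose (k-1) : ℚ) * ((n+1).choose (k+1) : ℚ))
        ≤ (((n+1).choose (k-1) : ℚ)) ^ 2 * ((((n+1).choose (k+1) : ℚ)) ^ 2) * ((((n+1).choose k : ℚ)) ^ 2) := by
      exact_mod_cast hY
    set c : ℚ := 2 / ((n : ℚ) * ((n : ℚ) + 1) ^ 2) with hc
    have hcond1 : 1 ≤ k - 1 ∧ k - 1 ≤ n := ⟨by omega, by omega⟩
    have hcond2 : 1 ≤ k ∧ k ≤ n := ⟨by omega, by omega⟩
    have hcond3 : 1 ≤ k + 1 ∧ k + 1 ≤ n := ⟨by omega, by omega⟩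
    simp only [baxterD, if_pos hcond1, if_pos hcond2, if_pos hcond3, e1, e2, e3, e4]
    have final := mul_le_mul_of_nonneg_left hYQ (sq_nonneg c)
    nlinarith [final]
end

section
/- For all integers n ≥ 1 and m ≥ 2, the identity (n+1) F_{n,2}(t) = d/dt [ F_{n,1}(t) * F_{n+1,1}(t) ] holds, where * denotes the Hadamard product; more generally, n F_{n-1,m}(t) = d/dt [ F_{n,1}(t) * F_{n-1,m-1}(t) ]. -/
/-!
Coefficientwise, `(n+1) F_{n,m+1} = (F_{n+1,1} * F_{n,m})'` reads
`(n+1) C(n,j) ∏_{i<m} C(n,j+1+i) = (j+1) C(n+1,j+1) ∏_{i<m} C(n,j+1+i)`, which is the absorption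
identity `(n+1) C(n,j) = (j+1) C(n+1,j+1)`. Both claimed identities are instances of it, the
first after commuting the Hadamard product.
-/

open Polynomial Finset

/-- The Hadamard (coefficientwise) product of two rational polynomials. -/
noncomputable def hadamard (f g : Polynomial ℚ) : Polynomial ℚ :=
  ∑ i ∈ Finset.range (min f.natDegree g.natDegree + 1),
    Polynomial.C (f.coeff i * g.coeff i) * Polynomial.X ^ i

/-- `F n m (t) = ∑_{k=0}^{n-m+1} C(n,k) C(n,k+1) ⋯ C(n,k+m-1) t^k`. -/
noncomputable def F (n m : ℕ) : Polynomial ℚ :=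
  ∑ k ∈ Finset.range (n - m + 2),
    Polynomial.C (∏ i ∈ Finset.range m, (n.choose (k + i) : ℚ)) * Polynomial.X ^ k

theorem coeff_hadamard (f g : ℚ[X]) (j : ℕ) :
    (hadamard f g).coeff j = f.coeff j * g.coeff j := by
  rw [hadamard, finsetSum_coeff]
  simp only [coeff_C_mul, coeff_X_pow, mul_ite, mul_one, mul_zero, sum_ite_eq]
  split_ifs with h
  · rfl
  · rw [mem_range] at h
    rcases le_total f.natDegree g.natDegree with hfg | hgf
    · rw [coeff_eq_zero_of_natDegree_lt (by omega : f.natDegree < j), zero_mul]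
    · rw [coeff_eq_zero_of_natDegree_lt (by omega : g.natDegree < j), mul_zero]

theorem hadamard_comm (f g : ℚ[X]) : hadamard f g = hadamard g f := by
  ext j
  rw [coeff_hadamard, coeff_hadamard, mul_comm]

theorem coeff_F {m : ℕ} (n k : ℕ) (hm : 1 ≤ m) :
    (F n m).coeff k = ∏ i ∈ range m, (n.choose (k + i) : ℚ) := by
  rw [F, finsetSum_coeff]
  simp only [coeff_C_mul, coeff_X_pow, mul_ite, mul_one, mul_zero, sum_ite_eq, mem_range]
  split_ifs with h
  · rfl
  · -- past the last term the factor `C(n, k + m - 1)` vanishes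
    refine (prod_eq_zero (i := m - 1) (by simp; omega) ?_).symm
    exact_mod_cast Nat.choose_eq_zero_of_lt (by omega)

theorem coeff_F_succ {m : ℕ} (n k : ℕ) (hm : 1 ≤ m) :
    (F n (m + 1)).coeff k = n.choose k * (F n m).coeff (k + 1) := by
  rw [coeff_F n k (by omega), coeff_F n (k + 1) hm, prod_range_succ', add_zero, mul_comm]
  simp only [add_assoc, add_comm 1]

theorem C_succ_mul_F_succ_eq_derivative_hadamard {m : ℕ} (n : ℕ) (hm : 1 ≤ m) :
    C ((n : ℚ) + 1) * F n (m + 1) = derivative (hadamard (F (n + 1) 1) (F n m)) := by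
  ext j
  have absorption : ((n : ℚ) + 1) * n.choose j = (n + 1).choose (j + 1) * (j + 1) := by
    exact_mod_cast Nat.add_one_mul_choose_eq n j
  rw [coeff_C_mul, coeff_derivative, coeff_hadamard, coeff_F_succ n j hm,
    coeff_F (n + 1) (j + 1) le_rfl, prod_range_one, add_zero, ← mul_assoc, absorption]
  ring

theorem F_derivative_hadamard (n m : ℕ) (hn : 1 ≤ n) (hm : 2 ≤ m) :
    Polynomial.C ((n : ℚ) + 1) * F n 2 =
        Polynomial.derivative (hadamard (F n 1) (F (n + 1) 1)) ∧
      Polynomial.C (n : ℚ) * F (n - 1) m =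
        Polynomial.derivative (hadamard (F n 1) (F (n - 1) (m - 1))) := by
  refine ⟨?_, ?_⟩
  · rw [hadamard_comm]
    exact C_succ_mul_F_succ_eq_derivative_hadamard n le_rfl
  · obtain ⟨n, rfl⟩ : ∃ n', n = n' + 1 := ⟨n - 1, by omega⟩
    obtain ⟨m, rfl⟩ : ∃ m', m = m' + 1 := ⟨m - 1, by omega⟩
    simpa using C_succ_mul_F_succ_eq_derivative_hadamard n (by omega : 1 ≤ m)
end
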